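/- arXiv:1601.01464 — 2 statements merged into one kernel-verified Lean document; each statement's English description precedes it below -/
import Mathlib

section
/- Let (Ω, ν) be a σ-finite measure space, W a strictly positive measurable function, and ∫ φWφ̃ dν = 1 with φ, φ̃ > 0. If f is measurable with ‖f‖_{∞,φ^{-1}} = 1 and ‖f‖_{1, Wφ̃} = 1 (i.e., equality holds at both endpoints of the embedding chain), then |f| = φ almost everywhere. -/
/-! Since `∫ φ W φ̃ dν = 1` is finite, the sup bound `|f| ≤ φ` a.e. together with equality of the
weighted integrals `∫ |f| W φ̃ = ∫ φ W φ̃` forces `|f| W φ̃ = φ W φ̃` a.e.; the weight `W φ̃` is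
positive and cancels. -/

open MeasureTheory ENNReal

section

variable {α : Type*} [MeasurableSpace α] {μ : Measure α}

theorem ae_abs_le_of_eLpNorm_top_mul_inv_le_one {f φ : α → ℝ} (hφ : ∀ x, 0 < φ x)
    (h : eLpNorm (fun x => f x * (φ x)⁻¹) ∞ μ ≤ 1) : ∀ᵐ x ∂μ, |f x| ≤ φ x := by
  rw [eLpNorm_exponent_top] at h
  filter_upwards [enorm_ae_le_eLpNormEssSup (fun x => f x * (φ x)⁻¹) μ] with x hx
  have hx1 : ENNReal.ofReal (|f x| / φ x) ≤ 1 := by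
    rw [← abs_of_pos (hφ x), ← abs_div, ← Real.enorm_eq_ofReal_abs]
    exact hx.trans h
  exact (div_le_one (hφ x)).mp (ENNReal.ofReal_le_one.mp hx1)

theorem ae_eq_of_ae_le_of_weighted_lintegral_le {u v w : α → ℝ} (hu : ∀ x, 0 ≤ u x)
    (hw : ∀ x, 0 < w x) (huv : ∀ᵐ x ∂μ, u x ≤ v x)
    (hvw : AEMeasurable (fun x => v x * w x) μ)
    (hfin : ∫⁻ x, ENNReal.ofReal (u x * w x) ∂μ ≠ ∞)
    (hle : ∫⁻ x, ENNReal.ofReal (v x * w x) ∂μ ≤ ∫⁻ x, ENNReal.ofReal (u x * w x) ∂μ) :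
    u =ᵐ[μ] v := by
  have hmono : ∀ᵐ x ∂μ, ENNReal.ofReal (u x * w x) ≤ ENNReal.ofReal (v x * w x) := by
    filter_upwards [huv] with x hx
    exact ENNReal.ofReal_le_ofReal (mul_le_mul_of_nonneg_right hx (hw x).le)
  filter_upwards [ae_eq_of_ae_le_of_lintegral_le hmono hfin hvw.ennreal_ofReal hle, huv]
    with x hx hxle
  have hweighted := (ENNReal.ofReal_eq_ofReal_iff (mul_nonneg (hu x) (hw x).le)
    (mul_nonneg ((hu x).trans hxle) (hw x).le)).mp hx
  exact mul_right_cancel₀ (hw x).ne' hweighted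

end

theorem equality_case_embedding_general {α : Type*} [MeasurableSpace α] (ν : Measure α)
    (W φ φt : α → ℝ) (hW : ∀ x, 0 < W x) (hφ : ∀ x, 0 < φ x) (hφt : ∀ x, 0 < φt x)
    (hmW : Measurable W) (hmφ : Measurable φ) (hmφt : Measurable φt)
    (hnorm : ∫⁻ x, ENNReal.ofReal (φ x * W x * φt x) ∂ν = 1)
    (f : α → ℝ)
    (hinf : eLpNorm (fun x => f x * (φ x)⁻¹) ∞ ν = 1)
    (hone : ∫⁻ x, ENNReal.ofReal (|f x| * W x * φt x) ∂ν = 1) :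
    ∀ᵐ x ∂ν, |f x| = φ x := by
  simp_rw [mul_assoc] at hnorm hone
  exact ae_eq_of_ae_le_of_weighted_lintegral_le (fun x => abs_nonneg (f x))
    (fun x => mul_pos (hW x) (hφt x)) (ae_abs_le_of_eLpNorm_top_mul_inv_le_one hφ hinf.le)
    (hmφ.mul (hmW.mul hmφt)).aemeasurable (by rw [hone]; exact one_ne_top) (by rw [hnorm, hone])

/-- Equality case in the endpoint embedding: if
`‖f‖_{∞,φ⁻¹} = 1` and `‖f‖_{1,Wφ̃} = 1` with `∫ φWφ̃ dν = 1`, then `|f| = φ` a.e. -/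
theorem equality_case_embedding {α : Type*} [MeasurableSpace α] (ν : Measure α) [SigmaFinite ν]
    (W φ φt : α → ℝ) (hW : ∀ x, 0 < W x) (hφ : ∀ x, 0 < φ x) (hφt : ∀ x, 0 < φt x)
    (hmW : Measurable W) (hmφ : Measurable φ) (hmφt : Measurable φt)
    (hnorm : ∫⁻ x, ENNReal.ofReal (φ x * W x * φt x) ∂ν = 1)
    (f : α → ℝ) (hf : Measurable f)
    (hinf : eLpNorm (fun x => f x * (φ x)⁻¹) ∞ ν = 1)
    (hone : ∫⁻ x, ENNReal.ofReal (|f x| * W x * φt x) ∂ν = 1) :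
    ∀ᵐ x ∂ν, |f x| = φ x :=
  equality_case_embedding_general ν W φ φt hW hφ hφt hmW hmφ hmφt hnorm f hinf hone
end

section
/- Let (Ω, ν) be a σ-finite measure space, W > 0, φ, φ̃ > 0 measurable with ∫ φWφ̃ dν < ∞, and let G ≥ 0 be a kernel with ∫_Ω G(x,y) W(x) φ̃(x) dν(x) ≤ φ̃(y)/(m−λ) for all y, where λ < m. Suppose ψ ∈ L^1(Wφ̃) satisfies ψ(x)/(m−λ) = ∫_Ω G(x,y) W(y) ψ(y) dν(y) for a.e. x, and that the inequality above is strict on a set of positive measure where Wφ̃|ψ| > 0 unless ψ has constant sign. Then: ∫ |∫ G(x,y)W(y)ψ(y)dν(y)| W(x)φ̃(x) dν(x) = ∫ (∫ G(x,y)W(y)|ψ(y)|dν(y)) W(x)φ̃(x) dν(x), and consequently ψ does not change sign a.e. (ψ ≥ 0 a.e. or ψ ≤ 0 a.e.). -/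
/-!
Write `Kf(x) = ∫ G(x,y) W(y) f(y) dν(y)` and `‖f‖ = ∫ |f| W φ̃ dν`. The eigenvalue equation gives
`‖Kψ‖ = ‖ψ‖/(m-λ)`, while Tonelli and the dual bound `∫ G(x,y) W(x) φ̃(x) dν(x) ≤ φ̃(y)/(m-λ)`
give `‖K|ψ|‖ ≤ ‖ψ‖/(m-λ)`. As `|Kψ| ≤ K|ψ|` pointwise and `‖ψ‖ < ∞`, equality `|Kψ(x)| = K|ψ|(x)`
holds for a.e. `x`; at one such `x` the weight `G(x,·) W` is positive, so equality in the triangle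
inequality forces `ψ` to have a constant sign.
-/

open MeasureTheory ENNReal Function

section

variable {α : Type*} [MeasurableSpace α] {μ : Measure α}

theorem ofReal_integral_le_lintegral_ofReal {f : α → ℝ} (hf : ∀ x, 0 ≤ f x) :
    ENNReal.ofReal (∫ x, f x ∂μ) ≤ ∫⁻ x, ENNReal.ofReal (f x) ∂μ := by
  refine ofReal_le_of_le_toReal ((Real.le_norm_self _).trans ?_)
  simpa only [Real.norm_of_nonneg (hf _)] using norm_integral_le_lintegral_norm f

theorem lintegral_ofReal_div_ne_top {f : α → ℝ} {c : ℝ} (hc : 0 ≤ c)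
    (hf : ∫⁻ x, ENNReal.ofReal (f x) ∂μ ≠ ∞) :
    ∫⁻ x, ENNReal.ofReal (f x / c) ∂μ ≠ ∞ := by
  simp_rw [div_eq_mul_inv, ofReal_mul' (inv_nonneg.2 hc)]
  rw [lintegral_mul_const' _ _ ofReal_ne_top]
  exact mul_ne_top hf ofReal_ne_top

theorem ae_nonneg_of_integral_eq_integral_abs {u : α → ℝ} (hu : Integrable u μ)
    (h : ∫ x, u x ∂μ = ∫ x, |u x| ∂μ) : 0 ≤ᵐ[μ] u := by
  have hzero : ∫ x, (|u x| - u x) ∂μ = 0 := by rw [integral_sub hu.abs hu, h, sub_self]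
  have hae := (integral_eq_zero_iff_of_nonneg (fun x => sub_nonneg.2 (le_abs_self (u x)))
    (hu.abs.sub hu)).1 hzero
  filter_upwards [hae] with x hx
  exact abs_eq_self.1 (sub_eq_zero.1 hx)

theorem ae_nonneg_or_ae_nonpos_of_abs_integral_eq {u : α → ℝ} (hu : Integrable u μ)
    (h : |∫ x, u x ∂μ| = ∫ x, |u x| ∂μ) : 0 ≤ᵐ[μ] u ∨ u ≤ᵐ[μ] 0 := by
  rcases abs_choice (∫ x, u x ∂μ) with hpos | hneg
  · exact .inl (ae_nonneg_of_integral_eq_integral_abs hu (hpos ▸ h))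
  · refine .inr ?_
    have := ae_nonneg_of_integral_eq_integral_abs hu.neg (by simpa [integral_neg, hneg] using h)
    filter_upwards [this] with x hx using neg_nonneg.1 hx

theorem ae_nonneg_or_ae_nonpos_of_lintegral_abs_eq {u : α → ℝ} (hu : AEStronglyMeasurable u μ)
    (h : ∫⁻ x, ENNReal.ofReal |u x| ∂μ = ENNReal.ofReal |∫ x, u x ∂μ|) :
    0 ≤ᵐ[μ] u ∨ u ≤ᵐ[μ] 0 := by
  have hu_int : Integrable u μ :=
    ⟨hu, (hasFiniteIntegral_iff_norm u).2 (by simpa only [Real.norm_eq_abs, h] using ofReal_lt_top)⟩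
  refine ae_nonneg_or_ae_nonpos_of_abs_integral_eq hu_int ?_
  rw [integral_eq_lintegral_of_nonneg_ae (ae_of_all _ fun x => abs_nonneg (u x)) hu_int.abs.1, h,
    toReal_ofReal (abs_nonneg _)]

theorem ae_nonneg_or_ae_nonpos_of_lintegral_mul_abs_eq {f g : α → ℝ} (hf : ∀ x, 0 < f x)
    (hfg : AEStronglyMeasurable (fun x => f x * g x) μ)
    (h : ∫⁻ x, ENNReal.ofReal (f x * |g x|) ∂μ = ENNReal.ofReal |∫ x, f x * g x ∂μ|) :
    0 ≤ᵐ[μ] g ∨ g ≤ᵐ[μ] 0 := by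
  have habs : ∀ x, |f x * g x| = f x * |g x| := fun x => by rw [abs_mul, abs_of_pos (hf x)]
  rcases ae_nonneg_or_ae_nonpos_of_lintegral_abs_eq hfg (by simpa only [habs] using h)
    with hpos | hneg
  · exact .inl (hpos.mono fun x hx => nonneg_of_mul_nonneg_right hx (hf x))
  · exact .inr (hneg.mono fun x hx => nonpos_of_mul_nonpos_right hx (hf x))

end

theorem lintegral_lintegral_mul_swap {α β : Type*} [MeasurableSpace α] [MeasurableSpace β]
    {μ : Measure α} {ν : Measure β} [SFinite μ] [SFinite ν] {k : α → β → ℝ≥0∞}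
    {f : α → ℝ≥0∞} {g : β → ℝ≥0∞} (hk : Measurable (uncurry k)) (hf : Measurable f)
    (hg : Measurable g) :
    ∫⁻ x, (∫⁻ y, k x y * g y ∂ν) * f x ∂μ = ∫⁻ y, (∫⁻ x, k x y * f x ∂μ) * g y ∂ν := by
  have hkfg : Measurable (uncurry fun x y => k x y * f x * g y) :=
    (hk.mul (hf.comp measurable_fst)).mul (hg.comp measurable_snd)
  calc ∫⁻ x, (∫⁻ y, k x y * g y ∂ν) * f x ∂μ = ∫⁻ x, ∫⁻ y, k x y * f x * g y ∂ν ∂μ := by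
        refine lintegral_congr fun x => ?_
        rw [← lintegral_mul_const (f := fun y => k x y * g y) _ (hk.of_uncurry_left.mul hg)]
        simp only [mul_right_comm]
    _ = ∫⁻ y, ∫⁻ x, k x y * f x * g y ∂μ ∂ν := lintegral_lintegral_swap hkfg.aemeasurable
    _ = ∫⁻ y, (∫⁻ x, k x y * f x ∂μ) * g y ∂ν :=
        lintegral_congr fun y => lintegral_mul_const _ (hk.of_uncurry_right.mul hf)

section Kernel

variable {α : Type*} [MeasurableSpace α] {ν : Measure α} {G : α → α → ℝ} {W φt ψ : α → ℝ}

theorem lintegral_ofReal_abs_integral_kernel_eq {c : ℝ} (hc : 0 < c)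
    (heig : ∀ᵐ x ∂ν, ψ x / c = ∫ y, G x y * W y * ψ y ∂ν) :
    ∫⁻ x, ENNReal.ofReal (|∫ y, G x y * W y * ψ y ∂ν| * W x * φt x) ∂ν =
      ∫⁻ x, ENNReal.ofReal (|ψ x| * W x * φt x / c) ∂ν := by
  refine lintegral_congr_ae ?_
  filter_upwards [heig] with x hx
  rw [← hx, abs_div, abs_of_pos hc, div_mul_eq_mul_div, div_mul_eq_mul_div]

theorem ofReal_abs_integral_kernel_le (hG : ∀ x y, 0 ≤ G x y) (hW : ∀ x, 0 ≤ W x)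
    (hφt : ∀ x, 0 ≤ φt x) (x : α) :
    ENNReal.ofReal (|∫ y, G x y * W y * ψ y ∂ν| * W x * φt x) ≤
      ENNReal.ofReal ((∫ y, G x y * W y * |ψ y| ∂ν) * W x * φt x) := by
  have habs : ∀ y, |G x y * W y * ψ y| = G x y * W y * |ψ y| := fun y => by
    rw [abs_mul, abs_of_nonneg (mul_nonneg (hG x y) (hW y))]
  have htri : |∫ y, G x y * W y * ψ y ∂ν| ≤ ∫ y, G x y * W y * |ψ y| ∂ν :=
    (abs_integral_le_integral_abs (f := fun y => G x y * W y * ψ y)).trans_eq (by simp only [habs])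
  exact ofReal_le_ofReal
    (mul_le_mul_of_nonneg_right (mul_le_mul_of_nonneg_right htri (hW x)) (hφt x))

theorem ofReal_integral_kernel_abs_le (hG : ∀ x y, 0 ≤ G x y) (hW : ∀ x, 0 ≤ W x)
    (hφt : ∀ x, 0 ≤ φt x) (x : α) :
    ENNReal.ofReal ((∫ y, G x y * W y * |ψ y| ∂ν) * W x * φt x) ≤
      (∫⁻ y, ENNReal.ofReal (G x y * W y * |ψ y|) ∂ν) * ENNReal.ofReal (W x * φt x) := by
  rw [mul_assoc, ofReal_mul' (mul_nonneg (hW x) (hφt x))]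
  gcongr
  exact ofReal_integral_le_lintegral_ofReal fun y =>
    mul_nonneg (mul_nonneg (hG x y) (hW y)) (abs_nonneg _)

theorem lintegral_lintegral_kernel_abs_le [SFinite ν] {c : ℝ} (hGm : Measurable (uncurry G))
    (hG : ∀ x y, 0 ≤ G x y) (hW : ∀ x, 0 ≤ W x) (hWm : Measurable W) (hφtm : Measurable φt)
    (hψm : Measurable ψ)
    (hdual : ∀ y, ∫⁻ x, ENNReal.ofReal (G x y * W x * φt x) ∂ν ≤ ENNReal.ofReal (φt y / c)) :
    ∫⁻ x, (∫⁻ y, ENNReal.ofReal (G x y * W y * |ψ y|) ∂ν) * ENNReal.ofReal (W x * φt x) ∂ν ≤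
      ∫⁻ y, ENNReal.ofReal (|ψ y| * W y * φt y / c) ∂ν := by
  have hsplit : ∀ x y (a b : ℝ),
      ENNReal.ofReal (G x y * a * b) = ENNReal.ofReal (G x y) * ENNReal.ofReal (a * b) :=
    fun x y a b => by rw [mul_assoc, ofReal_mul (hG x y)]
  simp only [hsplit] at hdual ⊢
  rw [lintegral_lintegral_mul_swap (k := fun x y => ENNReal.ofReal (G x y))
    (ENNReal.measurable_ofReal.comp hGm) (by fun_prop) (by fun_prop)]
  refine lintegral_mono fun y => ?_
  calc (∫⁻ x, ENNReal.ofReal (G x y) * ENNReal.ofReal (W x * φt x) ∂ν) *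
        ENNReal.ofReal (W y * |ψ y|)
      ≤ ENNReal.ofReal (φt y / c) * ENNReal.ofReal (W y * |ψ y|) := by gcongr; exact hdual y
    _ = ENNReal.ofReal (|ψ y| * W y * φt y / c) := by
        rw [← ofReal_mul' (mul_nonneg (hW y) (abs_nonneg _))]
        ring_nf

end Kernel

theorem L1_liouville_sign_general {α : Type*} [MeasurableSpace α] (ν : Measure α) [SigmaFinite ν]
    (G : α → α → ℝ) (hGmeas : Measurable (Function.uncurry G)) (hGpos : ∀ x y, 0 < G x y)
    (W φt : α → ℝ) (hW : ∀ x, 0 < W x) (hφt : ∀ x, 0 < φt x)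
    (hmW : Measurable W) (hmφt : Measurable φt)
    (m lam : ℝ) (hlam : lam < m)
    (hdual : ∀ y, ∫⁻ x, ENNReal.ofReal (G x y * W x * φt x) ∂ν ≤
      ENNReal.ofReal (φt y / (m - lam)))
    (ψ : α → ℝ) (hψmeas : Measurable ψ)
    (hψL1 : ∫⁻ y, ENNReal.ofReal (|ψ y| * W y * φt y) ∂ν < ∞)
    (heig : ∀ᵐ x ∂ν, ψ x / (m - lam) = ∫ y, G x y * W y * ψ y ∂ν) :
    (∫⁻ x, ENNReal.ofReal (|∫ y, G x y * W y * ψ y ∂ν| * W x * φt x) ∂ν =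
      ∫⁻ x, ENNReal.ofReal ((∫ y, G x y * W y * |ψ y| ∂ν) * W x * φt x) ∂ν) ∧
    ((∀ᵐ y ∂ν, 0 ≤ ψ y) ∨ (∀ᵐ y ∂ν, ψ y ≤ 0)) := by
  have hc : 0 < m - lam := sub_pos.mpr hlam
  have hG : ∀ x y, 0 ≤ G x y := fun x y => (hGpos x y).le
  have hW0 : ∀ x, 0 ≤ W x := fun x => (hW x).le
  have hφt0 : ∀ x, 0 ≤ φt x := fun x => (hφt x).le
  have h_abs := ofReal_abs_integral_kernel_le (ν := ν) (ψ := ψ) hG hW0 hφt0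
  have h_lintegral := ofReal_integral_kernel_abs_le (ν := ν) (ψ := ψ) hG hW0 hφt0
  have h_tonelli := lintegral_lintegral_kernel_abs_le hGmeas hG hW0 hmW hmφt hψmeas hdual
  have h_eigen := lintegral_ofReal_abs_integral_kernel_eq (φt := φt) hc heig
  have h_le := h_tonelli.trans h_eigen.ge
  refine ⟨le_antisymm (lintegral_mono h_abs) ((lintegral_mono h_lintegral).trans h_le), ?_⟩
  have hGm : Measurable fun p : α × α => G p.1 p.2 := hGmeas
  have h_ae_eq := ae_eq_of_ae_le_of_lintegral_le
    (ae_of_all _ fun x => (h_abs x).trans (h_lintegral x))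
    (h_eigen ▸ lintegral_ofReal_div_ne_top hc.le hψL1.ne) (by fun_prop) h_le
  rcases eq_or_ne ν 0 with rfl | hν
  · simp
  have := ae_neBot.2 hν
  obtain ⟨x, hx⟩ := h_ae_eq.exists
  beta_reduce at hx
  rw [mul_assoc, ofReal_mul (abs_nonneg _), ENNReal.mul_left_inj
    (ofReal_pos.2 (mul_pos (hW x) (hφt x))).ne' ofReal_ne_top] at hx
  exact ae_nonneg_or_ae_nonpos_of_lintegral_mul_abs_eq (f := fun y => G x y * W y)
    (fun y => mul_pos (hGpos x y) (hW y)) (by fun_prop) hx.symm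

/-- key computation of the `L¹` Liouville theorem: let `G > 0` be a kernel
with `∫ G(x,y) W(x) φ̃(x) dν(x) ≤ φ̃(y)/(m−λ)` for all `y`, and suppose `ψ ∈ L¹(Wφ̃)`,
`ψ ≠ 0` in `L¹(Wφ̃)`, satisfies the eigenvalue equation
`ψ(x)/(m−λ) = ∫ G(x,y) W(y) ψ(y) dν(y)` a.e.  Then equality holds in the triangle
inequality under the integral, and consequently `ψ` does not change sign a.e. -/
theorem L1_liouville_sign {α : Type*} [MeasurableSpace α] (ν : Measure α) [SigmaFinite ν]
    (G : α → α → ℝ) (hGmeas : Measurable (Function.uncurry G)) (hGpos : ∀ x y, 0 < G x y)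
    (W φ φt : α → ℝ) (hW : ∀ x, 0 < W x) (hφ : ∀ x, 0 < φ x) (hφt : ∀ x, 0 < φt x)
    (hmW : Measurable W) (hmφ : Measurable φ) (hmφt : Measurable φt)
    (hint : ∫⁻ x, ENNReal.ofReal (φ x * W x * φt x) ∂ν < ∞)
    (m lam : ℝ) (hlam : lam < m)
    (hdual : ∀ y, ∫⁻ x, ENNReal.ofReal (G x y * W x * φt x) ∂ν ≤
      ENNReal.ofReal (φt y / (m - lam)))
    (ψ : α → ℝ) (hψmeas : Measurable ψ)
    (hψL1 : ∫⁻ y, ENNReal.ofReal (|ψ y| * W y * φt y) ∂ν < ∞)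
    (hψne : 0 < ∫⁻ y, ENNReal.ofReal (|ψ y| * W y * φt y) ∂ν)
    (heig : ∀ᵐ x ∂ν, ψ x / (m - lam) = ∫ y, G x y * W y * ψ y ∂ν) :
    (∫⁻ x, ENNReal.ofReal (|∫ y, G x y * W y * ψ y ∂ν| * W x * φt x) ∂ν =
      ∫⁻ x, ENNReal.ofReal ((∫ y, G x y * W y * |ψ y| ∂ν) * W x * φt x) ∂ν) ∧
    ((∀ᵐ y ∂ν, 0 ≤ ψ y) ∨ (∀ᵐ y ∂ν, ψ y ≤ 0)) :=
  L1_liouville_sign_general ν G hGmeas hGpos W φt hW hφt hmW hmφt m lam hlam hdual ψ hψmeas hψL1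
    heig
end
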